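/- On a 3-manifold, the Wodzicki–Chern–Simons form CS^W_3(∇¹,∇⁰) on LM vanishes pointwise: for dim M = 3 (k = 2), the antisymmetrized sum Σ_σ sgn(σ) ∫_{S¹} tr[(Ω^M(X_{σ(1)}, ·)γ̇)(Ω^M(X_{σ(2)}, X_{σ(3)}))] is identically zero, due to the symmetries of the Riemann curvature tensor. -/
import Mathlib


open RealInnerProductSpace

lemma trace_inner_aux {V : Type*} [NormedAddCommGroup V] [InnerProductSpace ℝ V]
    [FiniteDimensional ℝ V] (b : OrthonormalBasis (Fin 3) ℝ V) (f : V →ₗ[ℝ] V) :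
    LinearMap.trace ℝ V f = ∑ i, ⟪b i, f (b i)⟫ := by
  rw [LinearMap.trace_eq_matrix_trace ℝ b.toBasis, Matrix.trace]
  congr 1
  ext i
  rw [Matrix.diag_apply, LinearMap.toMatrix_apply, OrthonormalBasis.coe_toBasis,
    OrthonormalBasis.coe_toBasis_repr_apply, OrthonormalBasis.repr_apply_apply]

lemma trace_comp_eq_sum {V : Type*} [NormedAddCommGroup V] [InnerProductSpace ℝ V]
    [FiniteDimensional ℝ V] (b : OrthonormalBasis (Fin 3) ℝ V) (f w : V →ₗ[ℝ] V) :
    LinearMap.trace ℝ V (f ∘ₗ w) = ∑ i, ∑ k, ⟪b k, w (b i)⟫ * ⟪b i, f (b k)⟫ := by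
  rw [trace_inner_aux b]
  refine Finset.sum_congr rfl fun i _ => ?_
  rw [LinearMap.comp_apply]
  conv_lhs => rw [← b.sum_repr' (w (b i))]
  rw [map_sum, inner_sum]
  refine Finset.sum_congr rfl fun k _ => ?_
  rw [map_smul, real_inner_smul_right]

lemma stepA {V : Type*} [NormedAddCommGroup V] [InnerProductSpace ℝ V]
    [FiniteDimensional ℝ V] (b : OrthonormalBasis (Fin 3) ℝ V)
    (R : V →ₗ[ℝ] V →ₗ[ℝ] V →ₗ[ℝ] V)
    (hanti : ∀ X Y : V, R X Y = -(R Y X))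
    (hskew : ∀ X Y Z W : V, ⟪R X Y Z, W⟫ = -⟪R X Y W, Z⟫)
    (hpair : ∀ X Y Z W : V, ⟪R X Y Z, W⟫ = ⟪R Z W X, Y⟫)
    (hbianchi : ∀ X Y Z : V, R X Y Z + R Y Z X + R Z X Y = 0)
    (u x y z : V) :
    LinearMap.trace ℝ V (((R x).flip u) ∘ₗ (R y z)) =
      (1/2) * LinearMap.trace ℝ V ((R x u) ∘ₗ (R y z)) := by
  have K : ∀ v w : V, ⟪w, R x v u⟫ = ⟪v, R x w u⟫ + ⟪w, R x u v⟫ := by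
    intro v w
    have h1 : ⟪R x v u + R v u x + R u x v, w⟫ = 0 := by rw [hbianchi x v u, inner_zero_left]
    rw [inner_add_left, inner_add_left] at h1
    have h2 : ⟪R v u x, w⟫ = -⟪R x w u, v⟫ := by rw [hpair v u x w, hskew]
    have h3 : ⟪R u x v, w⟫ = -⟪R x u v, w⟫ := by rw [hanti u x]; simp
    rw [real_inner_comm (R x v u) w, real_inner_comm (R x w u) v, real_inner_comm (R x u v) w]
    linarith
  have Ts : ∀ v w : V, ⟪w, R y z v⟫ = -⟪v, R y z w⟫ := by
    intro v w
    rw [real_inner_comm (R y z v) w, hskew, real_inner_comm (R y z w) v]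
  have Bs : ∀ v w : V, ⟪v, R x u w⟫ = -⟪w, R x u v⟫ := by
    intro v w
    rw [real_inner_comm (R x u w) v, hskew, real_inner_comm (R x u v) w]
  rw [trace_comp_eq_sum b, trace_comp_eq_sum b]
  simp only [LinearMap.flip_apply, Fin.sum_univ_three]
  linear_combination
    (⟪b 1, R y z (b 0)⟫) * (K (b 1) (b 0)) + (⟪b 1, R x (b 0) u⟫) * (Ts (b 0) (b 1)) +
      ((1:ℝ)/2) * ⟪b 1, R y z (b 0)⟫ * (Bs (b 0) (b 1)) - ((1:ℝ)/2) * ⟪b 1, R x u (b 0)⟫ * (Ts (b 0) (b 1)) +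
    (⟪b 2, R y z (b 0)⟫) * (K (b 2) (b 0)) + (⟪b 2, R x (b 0) u⟫) * (Ts (b 0) (b 2)) +
      ((1:ℝ)/2) * ⟪b 2, R y z (b 0)⟫ * (Bs (b 0) (b 2)) - ((1:ℝ)/2) * ⟪b 2, R x u (b 0)⟫ * (Ts (b 0) (b 2)) +
    (⟪b 2, R y z (b 1)⟫) * (K (b 2) (b 1)) + (⟪b 2, R x (b 1) u⟫) * (Ts (b 1) (b 2)) +
      ((1:ℝ)/2) * ⟪b 2, R y z (b 1)⟫ * (Bs (b 1) (b 2)) - ((1:ℝ)/2) * ⟪b 2, R x u (b 1)⟫ * (Ts (b 1) (b 2)) +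
    ((1:ℝ)/2) * ⟪b 0, R x (b 0) u⟫ * (Ts (b 0) (b 0)) - ((1:ℝ)/4) * ⟪b 0, R y z (b 0)⟫ * (Bs (b 0) (b 0)) +
    ((1:ℝ)/2) * ⟪b 1, R x (b 1) u⟫ * (Ts (b 1) (b 1)) - ((1:ℝ)/4) * ⟪b 1, R y z (b 1)⟫ * (Bs (b 1) (b 1)) +
    ((1:ℝ)/2) * ⟪b 2, R x (b 2) u⟫ * (Ts (b 2) (b 2)) - ((1:ℝ)/4) * ⟪b 2, R y z (b 2)⟫ * (Bs (b 2) (b 2))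


lemma wcs3_aux {V : Type*} [NormedAddCommGroup V] [InnerProductSpace ℝ V]
    [FiniteDimensional ℝ V] (b : OrthonormalBasis (Fin 3) ℝ V)
    (R : V →ₗ[ℝ] V →ₗ[ℝ] V →ₗ[ℝ] V)
    (hanti : ∀ X Y : V, R X Y = -(R Y X)) (u : V) :
    ∑ σ : Equiv.Perm (Fin 3), ((Equiv.Perm.sign σ : ℤ) : ℝ) *
      LinearMap.trace ℝ V ((R (b (σ 0)) u) ∘ₗ ((R (b (σ 1))) (b (σ 2)))) = 0 := by
  have hR0 : ∀ v w : V, R v w + R w v = 0 := by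
    intro v w; rw [hanti v w]; exact neg_add_cancel _
  have Panti1 : ∀ a j c d : Fin 3,
      LinearMap.trace ℝ V ((R (b a) (b j)) ∘ₗ ((R (b c)) (b d))) +
      LinearMap.trace ℝ V ((R (b j) (b a)) ∘ₗ ((R (b c)) (b d))) = 0 := by
    intro a j c d
    rw [← map_add, ← LinearMap.add_comp, hR0 (b a) (b j)]
    simp
  have Panti2 : ∀ a j c d : Fin 3,
      LinearMap.trace ℝ V ((R (b a) (b j)) ∘ₗ ((R (b c)) (b d))) +
      LinearMap.trace ℝ V ((R (b a) (b j)) ∘ₗ ((R (b d)) (b c))) = 0 := by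
    intro a j c d
    rw [← map_add, ← LinearMap.comp_add, hR0 (b c) (b d)]
    simp
  have Psw : ∀ a j c d : Fin 3,
      LinearMap.trace ℝ V ((R (b a) (b j)) ∘ₗ ((R (b c)) (b d))) =
      LinearMap.trace ℝ V ((R (b c) (b d)) ∘ₗ ((R (b a)) (b j))) := by
    intro a j c d
    exact LinearMap.trace_comp_comm' _ _
  have hexp : ∀ a c d : Fin 3,
      LinearMap.trace ℝ V ((R (b a) u) ∘ₗ ((R (b c)) (b d))) =
      ∑ j : Fin 3, ⟪b j, u⟫ * LinearMap.trace ℝ V ((R (b a) (b j)) ∘ₗ ((R (b c)) (b d))) := by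
    intro a c d
    set T : V →ₗ[ℝ] ℝ :=
      (LinearMap.trace ℝ V) ∘ₗ
        (((LinearMap.llcomp ℝ V V V).flip ((R (b c)) (b d))) ∘ₗ (R (b a))) with hT
    have h1 : ∀ w : V, LinearMap.trace ℝ V ((R (b a) w) ∘ₗ ((R (b c)) (b d))) = T w :=
      fun w => rfl
    rw [h1 u]
    conv_lhs => rw [← b.sum_repr' u]
    rw [map_sum]
    refine Finset.sum_congr rfl fun j _ => ?_
    rw [map_smul, smul_eq_mul, h1 (b j)]
  rw [show (Finset.univ : Finset (Equiv.Perm (Fin 3))) =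
      {1, Equiv.swap 0 1, Equiv.swap 0 2, Equiv.swap 1 2,
       Equiv.swap 0 1 * Equiv.swap 1 2, Equiv.swap 1 2 * Equiv.swap 0 1} from by decide]
  rw [Finset.sum_insert (by decide), Finset.sum_insert (by decide), Finset.sum_insert (by decide),
    Finset.sum_insert (by decide), Finset.sum_insert (by decide), Finset.sum_singleton]
  rw [show Equiv.Perm.sign (1 : Equiv.Perm (Fin 3)) = 1 from by decide,
    show Equiv.Perm.sign (Equiv.swap (0:Fin 3) 1) = -1 from by decide,
    show Equiv.Perm.sign (Equiv.swap (0:Fin 3) 2) = -1 from by decide,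
    show Equiv.Perm.sign (Equiv.swap (1:Fin 3) 2) = -1 from by decide,
    show Equiv.Perm.sign (Equiv.swap (0:Fin 3) 1 * Equiv.swap 1 2) = 1 from by decide,
    show Equiv.Perm.sign (Equiv.swap (1:Fin 3) 2 * Equiv.swap 0 1) = 1 from by decide]
  simp only [show ((1 : Equiv.Perm (Fin 3)) : Fin 3 → Fin 3) 0 = 0 from rfl,
    show ((1 : Equiv.Perm (Fin 3)) : Fin 3 → Fin 3) 1 = 1 from rfl,
    show ((1 : Equiv.Perm (Fin 3)) : Fin 3 → Fin 3) 2 = 2 from rfl,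
    show (Equiv.swap (0:Fin 3) 1) 0 = 1 from by decide,
    show (Equiv.swap (0:Fin 3) 1) 1 = 0 from by decide,
    show (Equiv.swap (0:Fin 3) 1) 2 = 2 from by decide,
    show (Equiv.swap (0:Fin 3) 2) 0 = 2 from by decide,
    show (Equiv.swap (0:Fin 3) 2) 1 = 1 from by decide,
    show (Equiv.swap (0:Fin 3) 2) 2 = 0 from by decide,
    show (Equiv.swap (1:Fin 3) 2) 0 = 0 from by decide,
    show (Equiv.swap (1:Fin 3) 2) 1 = 2 from by decide,
    show (Equiv.swap (1:Fin 3) 2) 2 = 1 from by decide,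
    show ((Equiv.swap (0:Fin 3) 1 * Equiv.swap 1 2) : Equiv.Perm (Fin 3)) 0 = 1 from by decide,
    show ((Equiv.swap (0:Fin 3) 1 * Equiv.swap 1 2) : Equiv.Perm (Fin 3)) 1 = 2 from by decide,
    show ((Equiv.swap (0:Fin 3) 1 * Equiv.swap 1 2) : Equiv.Perm (Fin 3)) 2 = 0 from by decide,
    show ((Equiv.swap (1:Fin 3) 2 * Equiv.swap 0 1) : Equiv.Perm (Fin 3)) 0 = 2 from by decide,
    show ((Equiv.swap (1:Fin 3) 2 * Equiv.swap 0 1) : Equiv.Perm (Fin 3)) 1 = 0 from by decide,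
    show ((Equiv.swap (1:Fin 3) 2 * Equiv.swap 0 1) : Equiv.Perm (Fin 3)) 2 = 1 from by decide]
  rw [hexp 0 1 2, hexp 1 0 2, hexp 2 1 0, hexp 0 2 1, hexp 1 2 0, hexp 2 0 1]
  simp only [Fin.sum_univ_three]
  push_cast
  linear_combination
    ⟪b 0, u⟫ * Panti1 0 0 1 2 - ⟪b 0, u⟫ * Panti2 0 0 1 2 - ⟪b 0, u⟫ * Panti1 0 1 0 2 + ⟪b 0, u⟫ * Psw 0 1 0 2 + ⟪b 0, u⟫ * Panti1 0 1 2 0 - ⟪b 0, u⟫ * Psw 0 1 2 0 + ⟪b 0, u⟫ * Panti2 0 2 0 1 - ⟪b 0, u⟫ * Panti1 0 2 1 0 +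
    ⟪b 1, u⟫ * Panti2 0 1 1 2 - ⟪b 1, u⟫ * Panti1 0 1 2 1 - ⟪b 1, u⟫ * Psw 0 1 2 1 - ⟪b 1, u⟫ * Panti2 0 2 1 1 + 2 * ⟪b 1, u⟫ * Psw 0 2 1 1 + ⟪b 1, u⟫ * Psw 1 0 2 1 + ⟪b 1, u⟫ * Panti2 1 1 0 2 +
    - ⟪b 2, u⟫ * Panti1 0 1 2 2 + ⟪b 2, u⟫ * Panti2 0 1 2 2 - ⟪b 2, u⟫ * Psw 0 1 2 2 - ⟪b 2, u⟫ * Panti2 0 2 1 2 + 2 * ⟪b 2, u⟫ * Psw 0 2 1 2 + ⟪b 2, u⟫ * Psw 1 0 2 2 + ⟪b 2, u⟫ * Panti2 1 2 0 2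


lemma stepB {V : Type*} [NormedAddCommGroup V] [InnerProductSpace ℝ V]
    [FiniteDimensional ℝ V] (hdim : Module.finrank ℝ V = 3)
    (R : V →ₗ[ℝ] V →ₗ[ℝ] V →ₗ[ℝ] V)
    (hanti : ∀ X Y : V, R X Y = -(R Y X))
    (u : V) (X : Fin 3 → V) :
    ∑ σ : Equiv.Perm (Fin 3), ((Equiv.Perm.sign σ : ℤ) : ℝ) *
      LinearMap.trace ℝ V ((R (X (σ 0)) u) ∘ₗ ((R (X (σ 1))) (X (σ 2)))) = 0 := by
  have b : OrthonormalBasis (Fin 3) ℝ V := (stdOrthonormalBasis ℝ V).reindex (finCongr hdim)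
  let m : MultilinearMap ℝ (fun _ : Fin 3 => V) ℝ :=
    { toFun := fun Y => LinearMap.trace ℝ V ((R (Y 0) u) ∘ₗ ((R (Y 1)) (Y 2)))
      map_update_add' := by
        intro dec Y i x y
        fin_cases i <;>
          simp [Function.update_apply, Fin.ext_iff, map_add, LinearMap.add_comp,
            LinearMap.comp_add, LinearMap.add_apply]
      map_update_smul' := by
        intro dec Y i c x
        fin_cases i <;>
          simp [Function.update_apply, Fin.ext_iff, map_smul, LinearMap.smul_comp,
            LinearMap.comp_smul, LinearMap.smul_apply] }
  have key : ∀ Y : Fin 3 → V,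
      (∑ σ : Equiv.Perm (Fin 3), ((Equiv.Perm.sign σ : ℤ) : ℝ) *
        LinearMap.trace ℝ V ((R (Y (σ 0)) u) ∘ₗ ((R (Y (σ 1))) (Y (σ 2))))) =
      MultilinearMap.alternatization m Y := by
    intro Y
    rw [MultilinearMap.alternatization_apply]
    refine Finset.sum_congr rfl fun σ _ => ?_
    rw [MultilinearMap.domDomCongr_apply]
    show _ = (Equiv.Perm.sign σ) • (m fun i => Y (σ i))
    rw [Units.smul_def, zsmul_eq_mul]
    rfl
  rw [key X]
  have hzero : MultilinearMap.alternatization m (⇑b.toBasis) = 0 := by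
    rw [← key]
    simp only [OrthonormalBasis.coe_toBasis]
    exact wcs3_aux b R hanti u
  have h3 : MultilinearMap.alternatization m X
      = (MultilinearMap.alternatization m ⇑b.toBasis) • b.toBasis.det X := by
    conv_lhs => rw [AlternatingMap.eq_smul_basis_det b.toBasis (MultilinearMap.alternatization m)]
    rfl
  rw [h3, hzero, zero_smul]

/-- On a 3-manifold the Wodzicki–Chern–Simons form `CS^W_3` vanishes
pointwise.  At a point of a loop `γ`, `V` is the 3-dimensional tangent space, `u = γ̇`
the velocity, `R` the (trilinear) curvature, with the usual symmetries: antisymmetry in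
the first two slots, skew-adjointness, pair symmetry `⟨R(X,Y)Z,W⟩ = ⟨R(Z,W)X,Y⟩`, and
the first Bianchi identity.  Then the antisymmetrized sum
`Σ_σ sgn(σ) tr[(R(X_{σ(1)}, ·)γ̇) ∘ (R(X_{σ(2)}, X_{σ(3)}))]`
(whose integral over `S¹` is the `CS^W_3` integrand) is identically zero.
Here `(R X).flip u : V →ₗ V` is the endomorphism `v ↦ R(X,v)γ̇`. -/
theorem wcs3_vanishes_pointwise
    {V : Type*} [NormedAddCommGroup V] [InnerProductSpace ℝ V]
    [FiniteDimensional ℝ V] (hdim : Module.finrank ℝ V = 3)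
    (R : V →ₗ[ℝ] V →ₗ[ℝ] V →ₗ[ℝ] V)
    (hanti : ∀ X Y : V, R X Y = -(R Y X))
    (hskew : ∀ X Y Z W : V, ⟪R X Y Z, W⟫ = -⟪R X Y W, Z⟫)
    (hpair : ∀ X Y Z W : V, ⟪R X Y Z, W⟫ = ⟪R Z W X, Y⟫)
    (hbianchi : ∀ X Y Z : V, R X Y Z + R Y Z X + R Z X Y = 0) :
    ∀ (u : V) (X : Fin 3 → V),
      ∑ σ : Equiv.Perm (Fin 3),
        ((Equiv.Perm.sign σ : ℤ) : ℝ) *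
          LinearMap.trace ℝ V
            (((R (X (σ 0))).flip u) ∘ₗ ((R (X (σ 1))) (X (σ 2)))) = 0 := by
  intro u X
  have b : OrthonormalBasis (Fin 3) ℝ V := (stdOrthonormalBasis ℝ V).reindex (finCongr hdim)
  have h1 : ∀ σ : Equiv.Perm (Fin 3),
      LinearMap.trace ℝ V (((R (X (σ 0))).flip u) ∘ₗ ((R (X (σ 1))) (X (σ 2)))) =
      (1/2) * LinearMap.trace ℝ V ((R (X (σ 0)) u) ∘ₗ ((R (X (σ 1))) (X (σ 2)))) :=
    fun σ => stepA b R hanti hskew hpair hbianchi u _ _ _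
  calc ∑ σ : Equiv.Perm (Fin 3), ((Equiv.Perm.sign σ : ℤ) : ℝ) *
          LinearMap.trace ℝ V (((R (X (σ 0))).flip u) ∘ₗ ((R (X (σ 1))) (X (σ 2))))
      = (1/2) * ∑ σ : Equiv.Perm (Fin 3), ((Equiv.Perm.sign σ : ℤ) : ℝ) *
          LinearMap.trace ℝ V ((R (X (σ 0)) u) ∘ₗ ((R (X (σ 1))) (X (σ 2)))) := by
        rw [Finset.mul_sum]
        refine Finset.sum_congr rfl fun σ _ => ?_
        rw [h1 σ]; ring
    _ = (1/2) * 0 := by rw [stepB hdim R hanti u X]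
    _ = 0 := by ring
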